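/- arXiv:2211.13361 — 6 statements merged into one kernel-verified Lean document; each statement's English description precedes it below -/
import Mathlib

section
/- Let κ ≥ λ ≥ μ be cardinals with κ regular, and let P and Q be directed partial orders. If P has calibre (κ, λ, μ) and Q is a Tukey quotient of P (P ≥_T Q), then Q has calibre (κ, λ, μ). -/
universe u

open Cardinal Set

namespace TukeySpec

/-- A subset `S` of a preorder is cofinal if every element has an upper bound in `S`. -/
def IsCofinal {P : Type*} [Preorder P] (S : Set P) : Prop :=
  ∀ p : P, ∃ s ∈ S, p ≤ s

/-- `Q` is a Tukey quotient of `P` (i.e. `P ≥_T Q`): there is a map `P → Q`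
sending cofinal sets to cofinal sets. -/
def TukeyQuot (P : Type*) (Q : Type*) [Preorder P] [Preorder Q] : Prop :=
  ∃ φ : P → Q, ∀ S : Set P, IsCofinal S → IsCofinal (φ '' S)

/-- `P` has calibre `(κ, l, m)`. -/
def Calibre (P : Type u) [Preorder P] (κ l m : Cardinal.{u}) : Prop :=
  ∀ P' : Set P, #P' = κ → ∃ R ⊆ P', #R = l ∧ ∀ B ⊆ R, #B = m → BddAbove B

/-- `P` has calibre `κ` (the simplified form): every `κ`-sized subset has a
`κ`-sized subset which is bounded in `P`. -/
def CalibreSimple (P : Type u) [Preorder P] (κ : Cardinal.{u}) : Prop :=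
  ∀ P' : Set P, #P' = κ → ∃ R ⊆ P', #R = κ ∧ BddAbove R

/-- The Tukey spectrum of a poset: all regular cardinals `κ` with `P ≥_T κ`,
where `κ` carries its usual (ordinal) ordering. -/
def specPoset (P : Type u) [Preorder P] : Set Cardinal.{u} :=
  {κ | κ.IsRegular ∧ TukeyQuot P ↥(Set.Iio κ.ord)}

/-- The product `∏A` of a set of cardinals: all functions on `A` with
`f a < a` (as ordinals). -/
def piSet (A : Set Cardinal.{0}) : Set (↥A → Ordinal.{0}) :=
  {f | ∀ a : ↥A, f a < (a : Cardinal).ord}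

/-- A family of members of `∏A` is bounded if it has an upper bound in `(∏A, ≤)`
(pointwise order). -/
def BddIn (A : Set Cardinal.{0}) (S : Set (↥A → Ordinal.{0})) : Prop :=
  ∃ h ∈ piSet A, ∀ f ∈ S, ∀ a : ↥A, f a ≤ h a

/-- The Tukey spectrum of a set `A` of regular cardinals: all regular `κ` for which
there is a `κ`-sized family `F ⊆ ∏A` all of whose `κ`-sized subfamilies are
unbounded in `(∏A, ≤)`. -/
def spec (A : Set Cardinal.{0}) : Set Cardinal.{0} :=
  {κ | κ.IsRegular ∧ ∃ F ⊆ piSet A, #F = Cardinal.lift.{1} κ ∧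
    ∀ F₀ ⊆ F, #F₀ = Cardinal.lift.{1} κ → ¬ BddIn A F₀}

/-- `cf(∏A/D)`: the least cardinality of a subset of `∏A` which is cofinal
modulo the ultrafilter `D`. -/
noncomputable def cofUlt (A : Set Cardinal.{0}) (D : Ultrafilter ↥A) : Cardinal.{1} :=
  sInf {c : Cardinal.{1} | ∃ S ⊆ piSet A, #S = c ∧
    ∀ f ∈ piSet A, ∃ g ∈ S, {a : ↥A | f a ≤ g a} ∈ D}

/-- `pcf(A)`: the set of all cofinalities `cf(∏A/D)` as `D` ranges over
ultrafilters on `A`. -/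
def pcf (A : Set Cardinal.{0}) : Set Cardinal.{0} :=
  {κ | ∃ D : Ultrafilter ↥A, Cardinal.lift.{1} κ = cofUlt A D}

/-- `ub(F)`: the set of coordinates `a ∈ A` where the family `F` is unbounded. -/
def ub (A : Set Cardinal.{0}) (F : Set (↥A → Ordinal.{0})) : Set ↥A :=
  {a | ∀ β < (a : Cardinal).ord, ∃ f ∈ F, β < f a}

/-- The strong part of the Tukey spectrum: `l ∈ spec*(A)` iff there is an
`l`-sized family `F ⊆ ∏A` such that every `l`-sized subfamily has a set of
unbounded coordinates which is unbounded in `sup A`. -/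
def specStarMem (A : Set Cardinal.{0}) (l : Cardinal.{0}) : Prop :=
  l.IsRegular ∧ ∃ F ⊆ piSet A, #F = Cardinal.lift.{1} l ∧
    ∀ F₀ ⊆ F, #F₀ = Cardinal.lift.{1} l →
      ∀ β < sSup A, ∃ a ∈ ub A F₀, β < (a : Cardinal)

/-- `κ` is a limit point of the set `X` of cardinals. -/
def IsLimitPt (X : Set Cardinal.{0}) (κ : Cardinal.{0}) : Prop :=
  ∀ β < κ, ∃ x ∈ X, β < x ∧ x < κ

/-- `C` is a closed unbounded subset of `κ`. -/
def IsClubIn (C : Set Ordinal.{0}) (κ : Ordinal.{0}) : Prop :=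
  C ⊆ Set.Iio κ ∧ (∀ β < κ, ∃ o ∈ C, β < o) ∧
    ∀ β < κ, β ≠ 0 → (∀ γ < β, ∃ o ∈ C, γ < o ∧ o < β) → β ∈ C

/-- A set `S` of cardinals is stationary in `κ`: it meets every club of `κ`. -/
def StatIn (S : Set Cardinal.{0}) (κ : Cardinal.{0}) : Prop :=
  ∀ C : Set Ordinal.{0}, IsClubIn C κ.ord → ∃ a ∈ S, a.ord ∈ C

/-- `κ` is Mahlo: strongly inaccessible and the regular cardinals below `κ`
are stationary in `κ`. -/
def IsMahlo (κ : Cardinal.{0}) : Prop :=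
  κ.IsInaccessible ∧ StatIn {a | a < κ ∧ a.IsRegular} κ

/-- `κ` is weakly compact: strongly inaccessible and `κ → (κ)²₂`. -/
def IsWeaklyCompact (κ : Cardinal.{0}) : Prop :=
  κ.IsInaccessible ∧
    ∀ c : Ordinal.{0} → Ordinal.{0} → Bool,
      ∃ H ⊆ Set.Iio κ.ord, #H = Cardinal.lift.{1} κ ∧
        ∃ b : Bool, ∀ α ∈ H, ∀ β ∈ H, α < β → c α β = b

/-- `θ` carries a Jónsson algebra: there is `F` from finite subsets of `θ` to `θ`
such that `F` applied to finite subsets of any `θ`-sized `H ⊆ θ` covers `θ`. -/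
def CarriesJonsson (θ : Cardinal.{0}) : Prop :=
  ∃ F : Finset Ordinal.{0} → Ordinal.{0},
    (∀ s : Finset Ordinal.{0}, (↑s : Set Ordinal) ⊆ Set.Iio θ.ord → F s < θ.ord) ∧
    ∀ H ⊆ Set.Iio θ.ord, #H = Cardinal.lift.{1} θ →
      ∀ γ < θ.ord, ∃ s : Finset Ordinal.{0}, (↑s : Set Ordinal) ⊆ H ∧ F s = γ

/-- `cf(∏A/J_bd)`: the least cardinality of a subset of `∏A` cofinal modulo
the ideal of bounded subsets of `A`. -/
noncomputable def cofJbd (A : Set Cardinal.{0}) : Cardinal.{1} :=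
  sInf {c : Cardinal.{1} | ∃ S ⊆ piSet A, #S = c ∧
    ∀ f ∈ piSet A, ∃ g ∈ S, ∃ b < sSup A, ∀ a : ↥A, b < (a : Cardinal) → f a ≤ g a}

/-- `μ` is a limit cardinal. -/
def IsLimitCard (μ : Cardinal.{0}) : Prop :=
  ℵ₀ ≤ μ ∧ ∀ ν < μ, Order.succ ν < μ

/-- If `κ ≥ l ≥ m` with `κ` regular, `P`, `Q` directed partial orders,
`P` has calibre `(κ, l, m)` and `P ≥_T Q`, then `Q` has calibre `(κ, l, m)`. -/
theorem statement0 {P Q : Type u} [PartialOrder P] [PartialOrder Q]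
    (hPd : IsDirected P (· ≤ ·)) (hQd : IsDirected Q (· ≤ ·))
    (κ l m : Cardinal.{u}) (hlκ : l ≤ κ) (hml : m ≤ l) (hreg : κ.IsRegular)
    (hcal : Calibre P κ l m) (hT : TukeyQuot P Q) :
    Calibre Q κ l m := by
  obtain ⟨φ, hφ⟩ := hT
  -- Key: for each q there is p with ∀ p' ≥ p, q ≤ φ p'
  have key : ∀ q : Q, ∃ p : P, ∀ p', p ≤ p' → q ≤ φ p' := by
    intro q
    by_contra h
    push_neg at h
    have hcof : IsCofinal {p' : P | ¬ q ≤ φ p'} := by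
      intro p
      obtain ⟨p', hp', hq⟩ := h p
      exact ⟨p', hq, hp'⟩
    obtain ⟨s, hs, hqs⟩ := hφ _ hcof q
    obtain ⟨p', hp', rfl⟩ := hs
    exact hp' hqs
  choose ψ hψ using key
  intro Q' hQ'
  by_cases hfib : ∃ p : P, κ ≤ #(Q' ∩ ψ ⁻¹' {p} : Set Q)
  · -- big fiber: bounded by φ p
    obtain ⟨p, hp⟩ := hfib
    obtain ⟨R, hRsub, hRcard⟩ := le_mk_iff_exists_subset.mp (hlκ.trans hp)
    refine ⟨R, fun q hq => (hRsub hq).1, hRcard, ?_⟩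
    intro B hB _
    refine ⟨φ p, fun q hq => ?_⟩
    have hpq : ψ q = p := (hRsub (hB hq)).2
    exact hψ q p hpq.le
  · push_neg at hfib
    -- image has size κ
    have himg : #(ψ '' Q' : Set P) = κ := by
      apply le_antisymm ((mk_image_le).trans hQ'.le)
      by_contra hlt
      push_neg at hlt
      have hcover : Q' ⊆ ⋃ p : (ψ '' Q' : Set P), (Q' ∩ ψ ⁻¹' {(p : P)}) := by
        intro q hq
        exact mem_iUnion.mpr ⟨⟨ψ q, mem_image_of_mem ψ hq⟩, hq, rfl⟩
      have h1 : #Q' ≤ Cardinal.sum fun p : (ψ '' Q' : Set P) => #(Q' ∩ ψ ⁻¹' {(p : P)} : Set Q) :=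
        (mk_le_mk_of_subset hcover).trans mk_iUnion_le_sum_mk
      have h2 : Cardinal.sum (fun p : (ψ '' Q' : Set P) => #(Q' ∩ ψ ⁻¹' {(p : P)} : Set Q)) < κ :=
        sum_lt_of_isRegular hreg hlt fun p => hfib _
      exact absurd (hQ' ▸ h1) (not_le.mpr h2)
    obtain ⟨Rp, hRpsub, hRpcard, hRpbdd⟩ := hcal _ himg
    -- choose a section g on Rp
    have hsec : ∀ p ∈ Rp, ∃ q ∈ Q', ψ q = p := fun p hp => by
      obtain ⟨q, hq, rfl⟩ := hRpsub hp
      exact ⟨q, hq, rfl⟩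
    have hQne : Nonempty Q := by
      have : (0 : Cardinal) < #Q' := by rw [hQ']; exact hreg.pos
      obtain ⟨⟨q, _⟩⟩ := mk_ne_zero_iff.mp this.ne'
      exact ⟨q⟩
    choose! g hg1 hg2 using hsec
    have hinjg : InjOn g Rp := fun p hp p' hp' h => by
      rw [← hg2 p hp, ← hg2 p' hp', h]
    refine ⟨g '' Rp, ?_, ?_, ?_⟩
    · rintro q ⟨p, hp, rfl⟩; exact hg1 p hp
    · rw [mk_image_eq_of_injOn g Rp hinjg, hRpcard]
    · intro B hB hBcard
      have hψB : InjOn ψ B := by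
        rintro q hq q' hq' h
        obtain ⟨p, hp, rfl⟩ := hB hq
        obtain ⟨p', hp', rfl⟩ := hB hq'
        rw [hg2 p hp, hg2 p' hp'] at h
        rw [h]
      have hB0sub : ψ '' B ⊆ Rp := by
        rintro _ ⟨q, hq, rfl⟩
        obtain ⟨p, hp, rfl⟩ := hB hq
        rw [hg2 p hp]; exact hp
      have hB0card : #(ψ '' B : Set P) = m := by
        rw [mk_image_eq_of_injOn ψ B hψB, hBcard]
      obtain ⟨pstar, hpstar⟩ := hRpbdd _ hB0sub hB0card
      refine ⟨φ pstar, fun q hq => ?_⟩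
      exact hψ q pstar (hpstar (mem_image_of_mem ψ hq))


end TukeySpec
end

section
/- Let P be a directed partial order and κ a regular cardinal. Then P fails to have calibre κ if and only if P ≥_T κ (κ taken with its usual ordering). -/
/-!
Both sides are equivalent to the existence of a family `x : κ → P` for which every set
`{i | x i ≤ p}` has fewer than `κ` elements. A witness `P'` against calibre `κ` is such a family
once enumerated, and conversely the range of such a family is a witness, being of size `κ` by
regularity. A Tukey map `φ : P → Q` gives `x : Q → P` with `φ q ≥ i` whenever `q ≥ x i`, and a
map `x` whose pullbacks of principal lower sets are bounded gives back a Tukey map `P → Q`; in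
`κ` itself, bounded means of size `< κ` because `κ` is regular.
-/

universe u

open Cardinal Set

namespace TukeySpec

section Tukey

variable {P Q R : Type*} [Preorder P] [Preorder Q] [Preorder R]

theorem exists_forall_le_apply_of_map_isCofinal {φ : P → Q}
    (hφ : ∀ S : Set P, IsCofinal S → IsCofinal (φ '' S)) (b : Q) :
    ∃ p, ∀ q, p ≤ q → b ≤ φ q := by
  by_contra! h
  obtain ⟨_, ⟨q, hq, rfl⟩, hbq⟩ := hφ {q | ¬ b ≤ φ q} (fun p => (h p).imp fun _ => And.symm) b
  exact hq hbq

theorem tukeyQuot_iff_exists_bddAbove_preimage_Iic :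
    TukeyQuot P Q ↔ ∃ x : Q → P, ∀ p, BddAbove (x ⁻¹' Iic p) := by
  constructor
  · rintro ⟨φ, hφ⟩
    choose x hx using exists_forall_le_apply_of_map_isCofinal hφ
    exact ⟨x, fun p => ⟨φ p, fun b hb => hx b p hb⟩⟩
  · rintro ⟨x, hx⟩
    choose φ hφ using hx
    refine ⟨φ, fun S hS b => ?_⟩
    obtain ⟨s, hsS, hbs⟩ := hS (x b)
    exact ⟨φ s, mem_image_of_mem φ hsS, hφ s hbs⟩

theorem TukeyQuot.trans_orderIso (h : TukeyQuot P Q) (e : Q ≃o R) : TukeyQuot P R := by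
  obtain ⟨φ, hφ⟩ := h
  refine ⟨e ∘ φ, fun S hS => ?_⟩
  rw [image_comp]
  exact e.map_isCofinal (hφ S hS)

theorem tukeyQuot_congr_right (e : Q ≃o R) : TukeyQuot P Q ↔ TukeyQuot P R :=
  ⟨(·.trans_orderIso e), (·.trans_orderIso e.symm)⟩

end Tukey

theorem bddAbove_iff_mk_lt_of_isRegular {κ : Cardinal.{u}} (hκ : κ.IsRegular)
    {s : Set κ.ord.ToType} : BddAbove s ↔ #s < κ := by
  constructor
  · rintro ⟨b, hb⟩
    calc #s ≤ #(Iic b) := mk_le_mk_of_subset hb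
      _ < #κ.ord.ToType := mk_Iic_lt b (by simp) (by simpa using hκ.aleph0_le)
      _ = κ := mk_ord_toType κ
  · intro hs
    by_contra hunb
    have := Order.cof_le (IsCofinal.of_not_bddAbove hunb)
    rw [Ordinal.cof_toType, hκ.cof_ord] at this
    exact this.not_gt hs

theorem not_calibreSimple_iff {P : Type u} [Preorder P] {κ : Cardinal.{u}} :
    ¬ CalibreSimple P κ ↔ ∃ P' : Set P, #P' = κ ∧ ∀ p, #↥(P' ∩ Iic p) < κ := by
  simp only [CalibreSimple, not_forall, not_exists, not_and, exists_prop]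
  refine exists_congr fun P' => and_congr_right fun hP' => ⟨fun h p => ?_, fun h R hR hRκ hRb => ?_⟩
  · refine lt_of_le_of_ne (hP' ▸ mk_le_mk_of_subset inter_subset_left) fun heq => ?_
    exact h _ inter_subset_left heq ⟨p, fun _ hx => hx.2⟩
  · obtain ⟨p, hp⟩ := hRb
    exact (mk_le_mk_of_subset (subset_inter hR hp)).not_gt (hRκ ▸ h p)

theorem exists_mk_inter_Iic_lt_iff_exists_mk_preimage_Iic_lt {P ι : Type u} [Preorder P]
    {κ : Cardinal.{u}} (hκ : κ.IsRegular) (hι : #ι = κ) :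
    (∃ P' : Set P, #P' = κ ∧ ∀ p, #↥(P' ∩ Iic p) < κ) ↔
      ∃ x : ι → P, ∀ p, #(x ⁻¹' Iic p) < κ := by
  constructor
  · rintro ⟨P', hP', hsmall⟩
    obtain ⟨e⟩ := Cardinal.eq.mp (hι.trans hP'.symm)
    refine ⟨fun i => e i, fun p => ?_⟩
    calc #((fun i => (e i : P)) ⁻¹' Iic p) ≤ #↥(P' ∩ Iic p) :=
          mk_le_of_injective (f := fun i => ⟨e i, (e i).2, i.2⟩)
            fun i j hij => Subtype.ext (e.injective (Subtype.ext (Subtype.mk.inj hij)))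
      _ < κ := hsmall p
  · rintro ⟨x, hx⟩
    refine ⟨range x, le_antisymm (hι ▸ mk_range_le) ?_, fun p => ?_⟩
    · -- a fibre of `x` lies in a small set, so by the pigeonhole principle there are `κ` of them
      by_contra! hrange
      obtain ⟨r, hr⟩ := infinite_pigeonhole (rangeFactorization x) (hι ▸ hκ.aleph0_le)
        (by rwa [hι, hκ.cof_ord])
      have hfibre : rangeFactorization x ⁻¹' {r} ⊆ x ⁻¹' Iic r.1 := by
        rintro i rfl
        exact le_rfl
      exact (mk_le_mk_of_subset hfibre).not_gt (hr ▸ hι ▸ hx r)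
    · rw [← image_preimage_eq_range_inter]
      exact mk_image_le.trans_lt (hx p)

theorem statement1_general {P : Type u} [PartialOrder P]
    (κ : Cardinal.{u}) (hreg : κ.IsRegular) :
    ¬ CalibreSimple P κ ↔ TukeyQuot P ↥(Set.Iio κ.ord) := by
  rw [not_calibreSimple_iff,
    exists_mk_inter_Iic_lt_iff_exists_mk_preimage_Iic_lt hreg (mk_ord_toType κ),
    tukeyQuot_congr_right Ordinal.ToType.mk, tukeyQuot_iff_exists_bddAbove_preimage_Iic]
  simp only [bddAbove_iff_mk_lt_of_isRegular hreg]

/-- For a directed partial order `P` and a regular cardinal `κ`,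
`P` fails to have calibre `κ` iff `P ≥_T κ` (with its usual ordering). -/
theorem statement1 {P : Type u} [PartialOrder P] (hPd : IsDirected P (· ≤ ·))
    (κ : Cardinal.{u}) (hreg : κ.IsRegular) :
    ¬ CalibreSimple P κ ↔ TukeyQuot P ↥(Set.Iio κ.ord) :=
  statement1_general κ hreg

end TukeySpec
end

section
/- For any sets A and B of infinite regular cardinals, spec(A ∪ B) = spec(A) ∪ spec(B). -/
universe u

open Cardinal Set

namespace TukeySpec

lemma isRegular_lift' {c : Cardinal.{0}} (h : c.IsRegular) :
    (Cardinal.lift.{1} c).IsRegular := by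
  constructor
  · exact Cardinal.aleph0_le_lift.mpr h.1
  · rw [← Cardinal.lift_ord, ← Ordinal.lift_cof]
    exact Cardinal.lift_le.mpr h.2

lemma spec_mono {C S : Set Cardinal.{0}} (hCS : C ⊆ S)
    (hS : ∀ x ∈ S, x ≠ 0) : spec C ⊆ spec S := by
  classical
  rintro κ ⟨hreg, F, hFsub, hFcard, hFunb⟩
  set e : (↥C → Ordinal.{0}) → (↥S → Ordinal.{0}) :=
    fun f x => if hx : x.1 ∈ C then f ⟨x.1, hx⟩ else 0 with he
  have hinj : Function.Injective e := by
    intro f g hfg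
    funext a
    have := congrFun hfg ⟨a.1, hCS a.2⟩
    simpa [he, a.2] using this
  refine ⟨hreg, e '' F, ?_, ?_, ?_⟩
  · rintro _ ⟨f, hf, rfl⟩
    intro x
    by_cases hx : x.1 ∈ C
    · simpa [he, hx] using hFsub hf ⟨x.1, hx⟩
    · simp only [he, hx, dif_neg, not_false_iff]
      rw [← Cardinal.ord_zero]
      exact Cardinal.ord_lt_ord.mpr (pos_iff_ne_zero.mpr (hS x.1 x.2))
  · rw [Cardinal.mk_image_eq hinj, hFcard]
  · intro F₀ hF₀sub hF₀card hbdd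
    obtain ⟨h, hhmem, hhbd⟩ := hbdd
    set G₀ : Set (↥C → Ordinal.{0}) := F ∩ e ⁻¹' F₀ with hG₀
    have himg : e '' G₀ = F₀ := by
      apply Set.Subset.antisymm
      · rintro _ ⟨f, hf, rfl⟩; exact hf.2
      · intro y hy
        obtain ⟨f, hf, rfl⟩ := hF₀sub hy
        exact ⟨f, ⟨hf, hy⟩, rfl⟩
    have hG₀card : #G₀ = Cardinal.lift.{1} κ := by
      rw [← Cardinal.mk_image_eq (s := G₀) hinj, himg, hF₀card]
    refine hFunb G₀ Set.inter_subset_left hG₀card ?_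
    refine ⟨fun a => h ⟨a.1, hCS a.2⟩, fun a => hhmem ⟨a.1, hCS a.2⟩, ?_⟩
    intro f hf a
    have hb := hhbd (e f) (himg ▸ Set.mem_image_of_mem e hf) ⟨a.1, hCS a.2⟩
    simpa [he, a.2] using hb

lemma extract {S C : Set Cardinal.{0}} (hCS : C ⊆ S) {κ : Cardinal.{0}}
    (hreg : (Cardinal.lift.{1} κ).IsRegular)
    (hbdd : ∀ G ⊆ piSet C, #G = Cardinal.lift.{1} κ →
      ∃ G₀ ⊆ G, #G₀ = Cardinal.lift.{1} κ ∧ BddIn C G₀)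
    (F : Set (↥S → Ordinal.{0})) (hFsub : F ⊆ piSet S)
    (hFcard : #F = Cardinal.lift.{1} κ) :
    ∃ F' ⊆ F, #F' = Cardinal.lift.{1} κ ∧
      ∃ h ∈ piSet C, ∀ f ∈ F', ∀ a : ↥C, f ⟨a.1, hCS a.2⟩ ≤ h a := by
  set r : (↥S → Ordinal.{0}) → (↥C → Ordinal.{0}) :=
    fun f a => f ⟨a.1, hCS a.2⟩ with hr
  have hrpi : ∀ f ∈ piSet S, r f ∈ piSet C := by
    intro f hf a
    exact hf ⟨a.1, hCS a.2⟩
  set G : Set (↥C → Ordinal.{0}) := r '' F with hG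
  by_cases hfib : ∃ g ∈ G, #(F ∩ r ⁻¹' {g} : Set _) = Cardinal.lift.{1} κ
  · obtain ⟨g, hgG, hfibcard⟩ := hfib
    obtain ⟨f₀, hf₀, rfl⟩ := hgG
    refine ⟨F ∩ r ⁻¹' {r f₀}, Set.inter_subset_left, hfibcard,
      r f₀, hrpi f₀ (hFsub hf₀), ?_⟩
    intro f hf a
    have : r f = r f₀ := hf.2
    exact le_of_eq (congrFun this a)
  · have hGcard : #G = Cardinal.lift.{1} κ := by
      refine le_antisymm (hFcard ▸ Cardinal.mk_image_le) ?_
      by_contra hlt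
      push_neg at hlt
      have hsub : F ⊆ ⋃ g : ↥G, (F ∩ r ⁻¹' {(g : ↥C → Ordinal.{0})}) := by
        intro f hf
        exact Set.mem_iUnion.mpr ⟨⟨r f, Set.mem_image_of_mem r hf⟩, hf, rfl⟩
      have hle : #F ≤ Cardinal.sum
          (fun g : ↥G => #(F ∩ r ⁻¹' {(g : ↥C → Ordinal.{0})} : Set _)) :=
        le_trans (Cardinal.mk_le_mk_of_subset hsub) Cardinal.mk_iUnion_le_sum_mk
      have hslt : Cardinal.sum
          (fun g : ↥G => #(F ∩ r ⁻¹' {(g : ↥C → Ordinal.{0})} : Set _)) <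
          Cardinal.lift.{1} κ := by
        refine Cardinal.sum_lt_of_isRegular hreg hlt ?_
        intro g
        refine lt_of_le_of_ne ?_ ?_
        · exact hFcard ▸ Cardinal.mk_le_mk_of_subset Set.inter_subset_left
        · intro hc
          exact hfib ⟨g, g.2, hc⟩
      exact absurd (hFcard ▸ hle) (not_le_of_gt hslt)
    obtain ⟨G₀, hG₀sub, hG₀card, h, hhpi, hhbd⟩ :=
      hbdd G (by rintro _ ⟨f, hf, rfl⟩; exact hrpi f (hFsub hf)) hGcard
    refine ⟨F ∩ r ⁻¹' G₀, Set.inter_subset_left, ?_, h, hhpi, ?_⟩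
    · refine le_antisymm (hFcard ▸ Cardinal.mk_le_mk_of_subset Set.inter_subset_left) ?_
      have : G₀ ⊆ r '' (F ∩ r ⁻¹' G₀) := by
        intro g hg
        obtain ⟨f, hf, rfl⟩ := hG₀sub hg
        exact ⟨f, ⟨hf, hg⟩, rfl⟩
      calc Cardinal.lift.{1} κ = #G₀ := hG₀card.symm
        _ ≤ #(r '' (F ∩ r ⁻¹' G₀)) := Cardinal.mk_le_mk_of_subset this
        _ ≤ #(F ∩ r ⁻¹' G₀ : Set _) := Cardinal.mk_image_le
    · intro f hf a
      exact hhbd (r f) hf.2 a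

/-- For sets `A`, `B` of infinite regular cardinals,
`spec(A ∪ B) = spec(A) ∪ spec(B)`. -/
theorem statement3 (A B : Set Cardinal.{0})
    (hA : ∀ a ∈ A, a.IsRegular) (hB : ∀ b ∈ B, b.IsRegular) :
    spec (A ∪ B) = spec A ∪ spec B := by
  classical
  have hS : ∀ x ∈ A ∪ B, x ≠ 0 := by
    rintro x (hx | hx)
    · exact (hA x hx).pos.ne'
    · exact (hB x hx).pos.ne'
  apply Set.Subset.antisymm
  · intro κ hκ
    by_contra hnot
    simp only [Set.mem_union, not_or] at hnot
    obtain ⟨hreg, F, hFsub, hFcard, hFunb⟩ := hκ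
    have hlreg := isRegular_lift' hreg
    have hbddA : ∀ G ⊆ piSet A, #G = Cardinal.lift.{1} κ →
        ∃ G₀ ⊆ G, #G₀ = Cardinal.lift.{1} κ ∧ BddIn A G₀ := by
      intro G hGsub hGcard
      by_contra hc
      push_neg at hc
      refine hnot.1 ⟨hreg, G, hGsub, hGcard, ?_⟩
      intro G₀ hG₀ hcard
      exact hc G₀ hG₀ hcard
    have hbddB : ∀ G ⊆ piSet B, #G = Cardinal.lift.{1} κ →
        ∃ G₀ ⊆ G, #G₀ = Cardinal.lift.{1} κ ∧ BddIn B G₀ := by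
      intro G hGsub hGcard
      by_contra hc
      push_neg at hc
      refine hnot.2 ⟨hreg, G, hGsub, hGcard, ?_⟩
      intro G₀ hG₀ hcard
      exact hc G₀ hG₀ hcard
    obtain ⟨F₁, hF₁sub, hF₁card, hA', hA'pi, hA'bd⟩ :=
      extract (Set.subset_union_left (s := A) (t := B)) hlreg hbddA F hFsub hFcard
    obtain ⟨F₂, hF₂sub, hF₂card, hB', hB'pi, hB'bd⟩ :=
      extract (Set.subset_union_right (s := A) (t := B)) hlreg hbddB F₁
        (fun f hf => hFsub (hF₁sub hf)) hF₁card
    refine hFunb F₂ (hF₂sub.trans hF₁sub) hF₂card ?_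
    refine ⟨fun x => if hx : x.1 ∈ A then hA' ⟨x.1, hx⟩ else hB' ⟨x.1, x.2.resolve_left hx⟩,
      ?_, ?_⟩
    · intro x
      by_cases hx : x.1 ∈ A
      · simpa [hx] using hA'pi ⟨x.1, hx⟩
      · simpa [hx] using hB'pi ⟨x.1, x.2.resolve_left hx⟩
    · intro f hf x
      by_cases hx : x.1 ∈ A
      · simpa [hx] using hA'bd f (hF₂sub hf) ⟨x.1, hx⟩
      · simpa [hx] using hB'bd f hf ⟨x.1, x.2.resolve_left hx⟩
  · rintro κ (hκ | hκ)
    · exact spec_mono Set.subset_union_left hS hκ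
    · exact spec_mono Set.subset_union_right hS hκ

end TukeySpec
end

section
/- For every set A of infinite regular cardinals, pcf(A) ⊆ spec(A). -/
/-!
Fix an ultrafilter `D` on `A`. Since every `a ∈ A` is an infinite cardinal, `∏A/D` is a linear
order without a largest element (`f <_D f + 1`), and `cf(∏A/D)` is its cofinality `κ`. The
cofinality of any linear order without maximum is regular, witnessed by a strictly increasing
cofinal sequence of length `κ`. Representatives in `∏A` of its terms form the required family:
`κ` of them are unbounded in the sequence, hence cofinal in `∏A/D`, and a pointwise bound `b`
of them would give `b + 1 ≤_D b`.
-/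

universe u

open Cardinal Set

open scoped Ordinal

namespace Order

theorem exists_isCofinal_wellFoundedLT (α : Type u) [LinearOrder α] :
    ∃ s : Set α, IsCofinal s ∧ WellFoundedLT s := by
  refine ⟨{a | ∀ b, WellOrderingRel b a → b < a}, isCofinal_setOfPred_imp_lt _, ?_⟩
  -- on the records, `<` refines the well-order `WellOrderingRel`
  have hsub : Subrelation (α := {a : α | ∀ b, WellOrderingRel b a → b < a}) (· < ·)
      (InvImage WellOrderingRel Subtype.val) := by
    intro x y hxy
    rcases trichotomous_of WellOrderingRel x.1 y.1 with h | h | h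
    · exact h
    · exact absurd hxy (by simp [Subtype.ext h])
    · exact absurd (x.2 y h) (not_lt.2 hxy.le)
  exact ⟨hsub.wf (InvImage.wf _ WellOrderingRel.isWellOrder.wf)⟩

theorem exists_strictMono_isCofinal_range (α : Type u) [LinearOrder α] :
    ∃ f : (cof α).ord.ToType → α, StrictMono f ∧ IsCofinal (range f) := by
  obtain ⟨s, hs, _⟩ := exists_isCofinal_wellFoundedLT α
  obtain ⟨t, ht, htype⟩ := Ordinal.exists_ord_cof_eq s
  rw [cof_eq_of_isCofinal hs, ← Ordinal.type_toType (cof α).ord] at htype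
  obtain ⟨e⟩ := Ordinal.type_eq.mp htype
  let e' : (cof α).ord.ToType ≃o t := (OrderIso.ofRelIsoLT e).symm
  refine ⟨fun i => (e' i : s), ?_, ?_⟩
  · exact (Subtype.strictMono_coe _).comp ((Subtype.strictMono_coe _).comp e'.strictMono)
  · convert hs.trans ht
    rw [range_comp', range_comp', e'.surjective.range_eq, image_univ, Subtype.range_coe]

theorem isRegular_cof (α : Type u) [LinearOrder α] [Nonempty α] [NoMaxOrder α] :
    (cof α).IsRegular := by
  refine ⟨aleph0_le_cof, ?_⟩
  obtain ⟨f, hf, hfr⟩ := exists_strictMono_isCofinal_range α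
  rw [← Ordinal.cof_toType, cof_congr_of_strictMono hf hfr]

end Order

theorem IsCofinal.of_subset_range_of_mk_eq {α β : Type u} [LinearOrder α] [LinearOrder β]
    [WellFoundedLT β] (hβ : ord #β = typeLT β) {f : β → α} (hf : StrictMono f)
    (hfr : IsCofinal (range f)) {s : Set α} (hs : s ⊆ range f) (hcard : #s = #β) :
    IsCofinal s := by
  by_contra hns
  obtain ⟨x, hx⟩ := not_isCofinal_iff.mp hns
  obtain ⟨_, ⟨i, rfl⟩, hxi⟩ := hfr x
  have hsi : s ⊆ f '' Iio i := by
    intro y hy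
    obtain ⟨j, rfl⟩ := hs hy
    exact ⟨j, hf.lt_iff_lt.mp ((hx _ hy).trans_le hxi), rfl⟩
  have := (mk_le_mk_of_subset hsi).trans mk_image_le |>.trans_lt (mk_Iio_lt i hβ)
  exact this.ne hcard

namespace TukeySpec

open Filter

section Ultraproduct

variable {A : Set Cardinal.{0}}

theorem add_one_mem_piSet (hA : ∀ a ∈ A, a.IsRegular) {f : ↥A → Ordinal.{0}}
    (hf : f ∈ piSet A) : f + 1 ∈ piSet A := fun a =>
  (Cardinal.isSuccLimit_ord (hA a a.2).aleph0_le).add_one_lt (hf a)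

theorem zero_mem_piSet (hA : ∀ a ∈ A, a.IsRegular) : 0 ∈ piSet A := fun a =>
  (Cardinal.isSuccLimit_ord (hA a a.2).aleph0_le).bot_lt

theorem coe_lt_coe_add_one {ι : Type*} {l : Ultrafilter ι} (f : ι → Ordinal) :
    (f : Germ (l : Filter ι) Ordinal) < ↑(f + 1) :=
  Germ.coe_lt.mpr (.of_forall fun _ => Order.lt_add_one_iff.mpr le_rfl)

variable (A) in
/-- `∏A/D`, realised as the germs along `D` of members of `∏A`. -/
def ultraproduct (D : Ultrafilter ↥A) : Set (Germ (D : Filter ↥A) Ordinal.{0}) :=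
  (↑) '' piSet A

variable {D : Ultrafilter ↥A}

theorem nonempty_ultraproduct (hA : ∀ a ∈ A, a.IsRegular) : Nonempty (ultraproduct A D) :=
  ⟨⟨_, 0, zero_mem_piSet hA, rfl⟩⟩

theorem noMaxOrder_ultraproduct (hA : ∀ a ∈ A, a.IsRegular) :
    NoMaxOrder (ultraproduct A D) := by
  refine ⟨?_⟩
  rintro ⟨_, f, hf, rfl⟩
  exact ⟨⟨_, f + 1, add_one_mem_piSet hA hf, rfl⟩, coe_lt_coe_add_one f⟩

theorem cofUlt_le {S : Set (↥A → Ordinal.{0})} (hS : S ⊆ piSet A)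
    (hcof : ∀ f ∈ piSet A, ∃ g ∈ S, {a : ↥A | f a ≤ g a} ∈ D) : cofUlt A D ≤ #S :=
  csInf_le' ⟨S, hS, rfl, hcof⟩

theorem exists_mk_eq_cofUlt : ∃ S ⊆ piSet A, #S = cofUlt A D ∧
    ∀ f ∈ piSet A, ∃ g ∈ S, {a : ↥A | f a ≤ g a} ∈ D :=
  csInf_mem (s := {c | ∃ S ⊆ piSet A, #S = c ∧
      ∀ f ∈ piSet A, ∃ g ∈ S, {a | f a ≤ g a} ∈ D})
    ⟨_, piSet A, subset_rfl, rfl, fun f hf => ⟨f, hf, Eventually.of_forall fun _ => le_rfl⟩⟩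

theorem cofUlt_eq_cof_ultraproduct : cofUlt A D = Order.cof (ultraproduct A D) := by
  apply le_antisymm
  · choose rep hrep using fun x : ultraproduct A D => x.2
    obtain ⟨s, hs, hcard⟩ := Order.exists_cof_eq (ultraproduct A D)
    refine (cofUlt_le ?_ fun f hf => ?_).trans (hcard ▸ mk_image_le (f := rep) (s := s))
    · rintro _ ⟨x, -, rfl⟩
      exact (hrep x).1
    · obtain ⟨y, hy, hfy⟩ := hs (⟨_, f, hf, rfl⟩ : ultraproduct A D)
      refine ⟨rep y, mem_image_of_mem _ hy, Germ.coe_le.mp ?_⟩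
      exact (hrep y).2 ▸ Subtype.coe_le_coe.mpr hfy
  · obtain ⟨S, hS, hcard, hcof⟩ := exists_mk_eq_cofUlt (D := D)
    let germ : S → ultraproduct A D := fun g => ⟨_, g, hS g.2, rfl⟩
    refine (Order.cof_le (s := range germ) ?_).trans (mk_range_le.trans hcard.le)
    rintro ⟨_, f, hf, rfl⟩
    obtain ⟨g, hg, hfg⟩ := hcof f hf
    exact ⟨germ ⟨g, hg⟩, mem_range_self _, Germ.coe_le.mpr hfg⟩

theorem not_bddIn_of_isCofinal (hA : ∀ a ∈ A, a.IsRegular) {s : Set (ultraproduct A D)}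
    (hs : _root_.IsCofinal s) {F : Set (↥A → Ordinal.{0})}
    (hF : ∀ x ∈ s, ∃ g ∈ F, (g : Germ (D : Filter ↥A) Ordinal.{0}) = x) :
    ¬ BddIn A F := by
  rintro ⟨b, hb, hbF⟩
  obtain ⟨y, hy, hby⟩ := hs ⟨_, b + 1, add_one_mem_piSet hA hb, rfl⟩
  obtain ⟨g, hg, hgy⟩ := hF y hy
  have hgb : (g : Germ (D : Filter ↥A) Ordinal.{0}) ≤ b :=
    Germ.coe_le.mpr (.of_forall (hbF g hg))
  exact ((coe_lt_coe_add_one b).trans_le (hgy ▸ Subtype.coe_le_coe.mpr hby |>.trans hgb)).false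

theorem exists_unbounded_family (hA : ∀ a ∈ A, a.IsRegular) :
    ∃ F ⊆ piSet A, #F = Order.cof (ultraproduct A D) ∧
      ∀ F₀ ⊆ F, #F₀ = Order.cof (ultraproduct A D) → ¬ BddIn A F₀ := by
  choose rep hrep using fun x : ultraproduct A D => x.2
  have hinj : Function.Injective rep := fun x y hxy =>
    Subtype.ext ((hrep x).2.symm.trans (hxy ▸ (hrep y).2))
  obtain ⟨e, he, hcof⟩ := Order.exists_strictMono_isCofinal_range (ultraproduct A D)
  have hmk := mk_ord_toType (Order.cof (ultraproduct A D))
  refine ⟨rep '' range e, ?_, ?_, fun F₀ hF₀ hcard => ?_⟩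
  · rintro _ ⟨x, -, rfl⟩
    exact (hrep x).1
  · rw [mk_image_eq hinj, mk_range_eq e he.injective, hmk]
  · have hs : rep '' (range e ∩ rep ⁻¹' F₀) = F₀ := by
      rw [image_inter_preimage, inter_eq_right.mpr hF₀]
    refine not_bddIn_of_isCofinal hA (s := range e ∩ rep ⁻¹' F₀) ?_ ?_
    · refine IsCofinal.of_subset_range_of_mk_eq (by simp) he hcof inter_subset_left ?_
      rw [← mk_image_eq hinj, hs, hcard, hmk]
    · rintro x ⟨-, hx⟩
      exact ⟨rep x, hx, (hrep x).2⟩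

end Ultraproduct

/-- For any set `A` of infinite regular cardinals, `pcf(A) ⊆ spec(A)`. -/
theorem statement4 (A : Set Cardinal.{0}) (hA : ∀ a ∈ A, a.IsRegular) :
    pcf A ⊆ spec A := by
  rintro κ ⟨D, hκ⟩
  rw [cofUlt_eq_cof_ultraproduct] at hκ
  have := nonempty_ultraproduct (D := D) hA
  have := noMaxOrder_ultraproduct (D := D) hA
  refine ⟨Cardinal.isRegular_lift_iff.mp (hκ ▸ Order.isRegular_cof _), ?_⟩
  simpa only [hκ] using exists_unbounded_family (D := D) hA

end TukeySpec
end

section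
/- Let κ be a Mahlo cardinal and let A ⊆ κ be a set of infinite regular cardinals that is stationary in κ. Then κ ∈ spec(A). -/
universe u

open Cardinal Set

namespace TukeySpec

/-! For `α < κ` let `f_α(a) = α` when `α < a` and `f_α(a) = 0` otherwise. Since `A` is unbounded
in `κ`, `α ↦ f_α` is injective. A `κ`-sized subfamily is indexed by a set `S` unbounded in `κ`;
the accumulation points of `S` form a club, so the stationary set `A` contains one of them, `a`.
Then the values `f_α(a) = α`, `α ∈ S ∩ a`, are cofinal in the regular cardinal `a`, so no member
of `∏A` bounds the subfamily at `a`. -/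

theorem isClubIn_Ioo {γ o : Ordinal.{0}} (ho : Order.IsSuccLimit o) (hγ : γ < o) :
    IsClubIn (Ioo γ o) o := by
  refine ⟨fun _ h => h.2, fun β hβ => ?_, fun β hβ hβ0 hacc => ?_⟩
  · exact ⟨Order.succ (max γ β), ⟨(le_max_left γ β).trans_lt (Order.lt_succ _),
      ho.succ_lt (max_lt hγ hβ)⟩, (le_max_right γ β).trans_lt (Order.lt_succ _)⟩
  · obtain ⟨_, hmem, -, hlt⟩ := hacc 0 (pos_iff_ne_zero.2 hβ0)
    exact ⟨hmem.1.trans hlt, hβ⟩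

theorem StatIn.exists_lt_ord {A : Set Cardinal.{0}} {κ : Cardinal.{0}} (hA : StatIn A κ)
    (hκ : ℵ₀ ≤ κ) {γ : Ordinal.{0}} (hγ : γ < κ.ord) : ∃ a ∈ A, γ < a.ord := by
  obtain ⟨a, ha, hγa, -⟩ := hA _ (isClubIn_Ioo (isSuccLimit_ord hκ) hγ)
  exact ⟨a, ha, hγa⟩

def accPts (S : Set Ordinal.{0}) : Set Ordinal.{0} :=
  {β | ∀ γ < β, ∃ α ∈ S, γ < α ∧ α < β}

theorem exists_mem_accPts_gt {o : Ordinal.{0}} (ho : ℵ₀ < o.cof) {S : Set Ordinal.{0}}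
    (hS : ∀ β < o, ∃ α ∈ S, β < α ∧ α < o) {β : Ordinal.{0}} (hβ : β < o) :
    ∃ δ ∈ accPts S, β < δ ∧ δ < o := by
  choose next hnext using fun β : Ordinal.{0} => (em (β < o)).elim
    (fun h => (hS β h).imp fun _ h' _ => h') (fun h => ⟨0, fun h' => absurd h' h⟩)
  -- An `ω`-chain through `S` above `β`; its supremum stays below `o` because `ℵ₀ < cof o`.
  set seq : ℕ → Ordinal.{0} := fun n => next^[n] β
  have hsucc (n : ℕ) : seq (n + 1) = next (seq n) := Function.iterate_succ_apply' next n β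
  have hseq_lt (n : ℕ) : seq n < o := by
    induction n with
    | zero => exact hβ
    | succ n ih => exact hsucc n ▸ (hnext _ ih).2.2
  have hstep (n : ℕ) : seq (n + 1) ∈ S ∧ seq n < seq (n + 1) :=
    hsucc n ▸ ⟨(hnext _ (hseq_lt n)).1, (hnext _ (hseq_lt n)).2.1⟩
  have hle_sup (n : ℕ) : seq n ≤ ⨆ m, seq m := Ordinal.le_iSup seq n
  refine ⟨⨆ n, seq n, fun γ hγ => ?_, (hstep 0).2.trans_le (hle_sup 1),
    Ordinal.iSup_lt_of_lt_cof (by rwa [mk_nat]) hseq_lt⟩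
  obtain ⟨n, hn⟩ := Ordinal.lt_iSup_iff.1 hγ
  exact ⟨seq (n + 1), (hstep n).1, hn.trans (hstep n).2, (hstep (n + 1)).2.trans_le (hle_sup _)⟩

theorem isClubIn_accPts_inter_Iio {o : Ordinal.{0}} (ho : ℵ₀ < o.cof) {S : Set Ordinal.{0}}
    (hS : ∀ β < o, ∃ α ∈ S, β < α ∧ α < o) : IsClubIn (accPts S ∩ Iio o) o := by
  refine ⟨inter_subset_right, fun β hβ => ?_, fun β hβ _ hacc => ⟨fun γ hγ => ?_, hβ⟩⟩
  · obtain ⟨δ, hδ, hβδ, hδo⟩ := exists_mem_accPts_gt ho hS hβ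
    exact ⟨δ, ⟨hδ, hδo⟩, hβδ⟩
  · obtain ⟨δ, ⟨hδ, -⟩, hγδ, hδβ⟩ := hacc γ hγ
    obtain ⟨α, hα, hγα, hαδ⟩ := hδ γ hγδ
    exact ⟨α, hα, hγα, hαδ.trans hδβ⟩

theorem exists_mem_gt_of_mk_eq {κ : Cardinal.{0}} (hκ : ℵ₀ ≤ κ) {S : Set Ordinal.{0}}
    (hS : #S = lift.{1} κ) {β : Ordinal.{0}} (hβ : β < κ.ord) : ∃ α ∈ S, β < α := by
  by_contra! hbdd
  have hle : #S ≤ #(Iio (Order.succ β)) :=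
    mk_le_mk_of_subset fun α hα => Order.lt_succ_of_le (hbdd α hα)
  rw [hS, mk_Iio_ordinal, lift_le] at hle
  exact hle.not_gt (lt_ord.1 ((isSuccLimit_ord hκ).succ_lt hβ))

noncomputable def cutoff (A : Set Cardinal.{0}) (α : Ordinal.{0}) : ↥A → Ordinal.{0} :=
  fun a => if α < (a : Cardinal).ord then α else 0

theorem cutoff_apply_of_lt {A : Set Cardinal.{0}} {α : Ordinal.{0}} {a : ↥A}
    (h : α < (a : Cardinal).ord) : cutoff A α a = α :=
  if_pos h

theorem cutoff_mem_piSet {A : Set Cardinal.{0}} (hA : 0 ∉ A) (α : Ordinal.{0}) :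
    cutoff A α ∈ piSet A := by
  intro a
  by_cases h : α < (a : Cardinal).ord
  · rwa [cutoff_apply_of_lt h]
  · rw [cutoff, if_neg h, ord_pos, pos_iff_ne_zero]
    exact fun h0 => hA (h0 ▸ a.2)

theorem cutoff_injOn {A : Set Cardinal.{0}} {κ : Cardinal.{0}} (hA : StatIn A κ) (hκ : ℵ₀ ≤ κ) :
    InjOn (cutoff A) (Iio κ.ord) := by
  intro α hα α' hα' heq
  obtain ⟨a, ha, hlt⟩ := hA.exists_lt_ord hκ (max_lt hα hα')
  have hval := congrFun heq ⟨a, ha⟩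
  rwa [cutoff_apply_of_lt ((le_max_left α α').trans_lt hlt),
    cutoff_apply_of_lt ((le_max_right α α').trans_lt hlt)] at hval

theorem not_bddIn_cutoff_image {A : Set Cardinal.{0}} {κ : Cardinal.{0}} (hκ : κ.IsRegular)
    (hκ' : ℵ₀ < κ) (hA : StatIn A κ) {S : Set Ordinal.{0}} (hSκ : S ⊆ Iio κ.ord)
    (hS : #S = lift.{1} κ) : ¬ BddIn A (cutoff A '' S) := by
  rintro ⟨h, hh, hbound⟩
  have hcof : ℵ₀ < κ.ord.cof := by rwa [hκ.cof_ord]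
  have hunbdd : ∀ β < κ.ord, ∃ α ∈ S, β < α ∧ α < κ.ord := fun β hβ =>
    (exists_mem_gt_of_mk_eq hκ.aleph0_le hS hβ).imp fun α ⟨hα, hβα⟩ => ⟨hα, hβα, hSκ hα⟩
  obtain ⟨a, ha, hacc, -⟩ := hA _ (isClubIn_accPts_inter_Iio hcof hunbdd)
  obtain ⟨α, hα, hhα, hαa⟩ := hacc _ (hh ⟨a, ha⟩)
  have hle := hbound _ (mem_image_of_mem _ hα) ⟨a, ha⟩
  rw [cutoff_apply_of_lt hαa] at hle
  exact hle.not_gt hhα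

theorem statement11_general (κ : Cardinal.{0}) (hM : IsMahlo κ)
    (A : Set Cardinal.{0}) (hA : ∀ a ∈ A, a.IsRegular)
    (hstat : StatIn A κ) :
    κ ∈ spec A := by
  have hκ : κ.IsRegular := hM.1.isRegular
  have hinj := cutoff_injOn hstat hκ.aleph0_le
  refine ⟨hκ, cutoff A '' Iio κ.ord,
    image_subset_iff.2 fun α _ => cutoff_mem_piSet (fun h0 => (hA 0 h0).pos.ne rfl) α, ?_, ?_⟩
  · rw [mk_image_eq_of_injOn _ _ hinj, mk_Iio_ordinal, card_ord]
  · intro F₀ hF₀ hcard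
    obtain ⟨S, hS, rfl⟩ := subset_image_iff.1 hF₀
    rw [mk_image_eq_of_injOn _ _ (hinj.mono hS)] at hcard
    exact not_bddIn_cutoff_image hκ hM.1.aleph0_lt hstat hS hcard

/-- If `κ` is Mahlo and `A ⊆ κ` is a stationary set of infinite
regular cardinals, then `κ ∈ spec(A)`. -/
theorem statement11 (κ : Cardinal.{0}) (hM : IsMahlo κ)
    (A : Set Cardinal.{0}) (hA : ∀ a ∈ A, a.IsRegular) (hsub : ∀ a ∈ A, a < κ)
    (hstat : StatIn A κ) :
    κ ∈ spec A :=
  statement11_general κ hM A hA hstat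

end TukeySpec
end

section
/- Let κ be a weakly compact cardinal and let A ⊆ κ be a set of infinite regular cardinals that is unbounded in κ but nonstationary in κ. Then κ ∉ spec(A): for every family F ⊆ ∏A with |F| = κ there is a subfamily F₀ ⊆ F with |F₀| = κ that is bounded in (∏A, ≤). -/
universe u

open Cardinal Set

/-!
Enumerate `F` as `⟨f_α : α < κ⟩` and colour a pair `α < β` by whether `f_α <_lex f_β`,
comparing functions lexicographically along the well-order of `A`. Weak compactness yields a
homogeneous `H` of size `κ`, along which `α ↦ f_α` is lexicographically monotone. For `c < κ`
there are fewer than `κ` possible restrictions of the `f_α` to `{a ∈ A | a ≤ c}` (`κ` is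
inaccessible), and restriction to an initial segment preserves the lexicographic order, so along
`H` this restriction is eventually constant, from some `δ(c) ∈ H` on. Choose `s(c) ∈ H` above `c`
and above every `δ(c')` with `c' ≤ c`, and take the subfamily `f_{s(c)}` for `c` in a club `C`
disjoint from `A`. At a coordinate `a ∈ A`, every member with `c ≥ a` takes the value
`f_{δ(a)}(a)`; since `a ∉ C` and `C` is closed, `C ∩ a` is bounded below `a`, so the remaining
members are fewer than `a` and regularity of `a` bounds them.
-/

theorem Pi.Lex.monotone_domRestrict {ι : Type*} [LinearOrder ι] {β : ι → Type*}
    [∀ i, PartialOrder (β i)] {L : Set ι} (hL : IsLowerSet L) :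
    Monotone fun x : Lex (∀ i, β i) => toLex (L.domRestrict (ofLex x)) := by
  intro x y hxy
  obtain rfl | ⟨i, hbelow, hi⟩ := hxy.eq_or_lt
  · rfl
  by_cases hiL : i ∈ L
  · exact le_of_lt ⟨⟨i, hiL⟩, fun j hj => hbelow j hj, hi⟩
  · exact le_of_eq <| funext fun j => hbelow j <| lt_of_not_ge fun hij => hiL (hL hij j.2)

namespace Cardinal

variable {κ : Cardinal.{u}} {S : Set Ordinal.{u}}

theorem mk_lt_of_subset_Iio {β : Ordinal.{u}} (hβ : β < κ.ord) (hS : S ⊆ Iio β) :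
    #S < Cardinal.lift.{u + 1} κ :=
  (mk_le_mk_of_subset hS).trans_lt <| by rwa [mk_Iio_ordinal, lift_lt, ← lt_ord]

theorem IsRegular.exists_subset_Iio_of_mk_lt (hκ : κ.IsRegular) (hS : S ⊆ Iio κ.ord)
    (hSκ : #S < Cardinal.lift.{u + 1} κ) : ∃ β < κ.ord, S ⊆ Iio β := by
  have hcof : #S < (Ordinal.lift.{u + 1} κ.ord).cof := by
    rwa [← Ordinal.lift_cof, hκ.cof_ord]
  refine ⟨_, Ordinal.sSup_add_one_lt_of_lt_cof hcof hS, fun x hx => ?_⟩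
  refine (Order.lt_add_one_iff.mpr le_rfl).trans_le
    (le_csSup ⟨κ.ord, ?_⟩ (mem_image_of_mem (· + 1) hx))
  rintro _ ⟨y, hy, rfl⟩
  exact Order.add_one_le_of_lt (hS hy)

theorem IsRegular.exists_mem_subset_Iio (hκ : κ.IsRegular) {H : Set Ordinal.{u}}
    (hH : #H = Cardinal.lift.{u + 1} κ) (hS : S ⊆ Iio κ.ord)
    (hSκ : #S < Cardinal.lift.{u + 1} κ) : ∃ α ∈ H, S ⊆ Iio α := by
  obtain ⟨β, hβκ, hSβ⟩ := hκ.exists_subset_Iio_of_mk_lt hS hSκ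
  by_contra! h
  have : H ⊆ Iio β := fun α hα =>
    lt_of_not_ge fun hβα => h α hα (hSβ.trans (Iio_subset_Iio hβα))
  exact (mk_lt_of_subset_Iio hβκ this).ne hH

theorem IsRegular.mk_eq_of_forall_exists_le (hκ : κ.IsRegular) (hS : S ⊆ Iio κ.ord)
    (hunb : ∀ β < κ.ord, ∃ x ∈ S, β ≤ x) : #S = Cardinal.lift.{u + 1} κ := by
  refine ((mk_le_mk_of_subset hS).trans (by rw [mk_Iio_ordinal, card_ord])).antisymm ?_
  by_contra! hSκ
  obtain ⟨β, hβκ, hSβ⟩ := hκ.exists_subset_Iio_of_mk_lt hS hSκ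
  obtain ⟨x, hx, hβx⟩ := hunb β hβκ
  exact (hSβ hx).not_ge hβx

theorem IsRegular.exists_selection (hκ : κ.IsRegular) {H : Set Ordinal.{u}}
    (hH : #H = Cardinal.lift.{u + 1} κ) {δ : Ordinal.{u} → Ordinal.{u}}
    (hδ : ∀ c < κ.ord, δ c < κ.ord) :
    ∃ s : Ordinal.{u} → Ordinal.{u}, ∀ c < κ.ord, s c ∈ H ∧ c < s c ∧ ∀ c' ≤ c, δ c' < s c := by
  choose! s hsH hs using fun c (hc : c < κ.ord) =>
    hκ.exists_mem_subset_Iio hH (S := (fun c' => max c' (δ c')) '' Iic c)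
      (by rintro _ ⟨c', hc', rfl⟩; exact max_lt (hc'.trans_lt hc) (hδ c' (hc'.trans_lt hc)))
      (mk_image_le.trans_lt (mk_lt_of_subset_Iio ((isSuccLimit_ord hκ.aleph0_le).succ_lt hc)
        (Order.Iio_succ c).ge))
  refine ⟨s, fun c hc => ⟨hsH c hc, ?_, fun c' hc' => ?_⟩⟩
  · exact (le_max_left _ _).trans_lt (hs c hc ⟨c, mem_Iic.mpr le_rfl, rfl⟩)
  · exact (le_max_right _ _).trans_lt (hs c hc ⟨c', hc', rfl⟩)

theorem IsRegular.exists_forall_ge_eq_of_monotoneOn (hκ : κ.IsRegular) {P : Type (u + 1)}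
    [PartialOrder P] {v : Ordinal.{u} → P} {H : Set Ordinal.{u}} (hH : H ⊆ Iio κ.ord)
    (hHκ : #H = Cardinal.lift.{u + 1} κ) (hv : MonotoneOn v H ∨ AntitoneOn v H)
    (hvH : #(v '' H) < Cardinal.lift.{u + 1} κ) :
    ∃ δ ∈ H, ∀ α ∈ H, δ ≤ α → v α = v δ := by
  obtain ⟨_, t, htH, htκ, htv⟩ := infinite_pigeonhole_set
    (fun α : H => (⟨v α, mem_image_of_mem v α.2⟩ : v '' H)) (Cardinal.lift.{u + 1} κ) hHκ.ge
    (by simpa using hκ.aleph0_le) (by rwa [hκ.lift.cof_ord])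
  have htκ' : #t = Cardinal.lift.{u + 1} κ :=
    ((mk_le_mk_of_subset htH).trans hHκ.le).antisymm htκ
  have htv' : ∀ α ∈ t, ∀ β ∈ t, v α = v β := fun α hα β hβ =>
    congrArg Subtype.val ((htv hα).trans (htv hβ).symm)
  obtain ⟨δ, hδ⟩ : t.Nonempty := by
    rw [← nonempty_coe_sort, ← mk_ne_zero_iff, htκ']
    simpa using (aleph0_pos.trans_le hκ.aleph0_le).ne'
  refine ⟨δ, htH hδ, fun α hα hδα => ?_⟩
  obtain ⟨γ, hγ, hαγ⟩ := hκ.exists_mem_subset_Iio htκ' (singleton_subset_iff.mpr (hH hα))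
    (by simpa using one_lt_aleph0.trans_le hκ.aleph0_le)
  have hαγ : α ≤ γ := (hαγ rfl).le
  rcases hv with hv | hv
  · exact le_antisymm ((hv hα (htH hγ) hαγ).trans (htv' γ hγ δ hδ).le) (hv (htH hδ) hα hδα)
  · exact le_antisymm (hv (htH hδ) hα hδα) ((htv' δ hδ γ hγ).le.trans (hv hα (htH hγ) hαγ))

theorem IsInaccessible.power_lt (hκ : κ.IsInaccessible) {μ ν : Cardinal.{u}} (hμ : μ < κ)
    (hν : ν < κ) : μ ^ ν < κ := by
  set m := max (max μ ν) ℵ₀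
  have hm0 : m ≠ 0 := (aleph0_pos.trans_le (le_max_right _ _)).ne'
  calc μ ^ ν ≤ m ^ m :=
        (power_le_power_right (le_max_left _ _ |>.trans (le_max_left _ _))).trans
          (power_le_power_left hm0 (le_max_right μ ν |>.trans (le_max_left _ _)))
    _ = 2 ^ m := power_self_eq (le_max_right _ _)
    _ < κ := hκ.isStrongPrelimit (max_lt (max_lt hμ hν) hκ.aleph0_lt)

theorem IsInaccessible.mk_arrow_Iio_lt (hκ : κ.IsInaccessible) {X : Type (u + 1)}
    (hX : #X < Cardinal.lift.{u + 1} κ) {c : Ordinal.{u}} (hc : c < κ.ord) :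
    #(X → Iio c) < Cardinal.lift.{u + 1} κ := by
  obtain ⟨μ, hμ⟩ := mem_range_lift_of_le hX.le
  rw [← hμ, lift_lt] at hX
  rw [mk_arrow, lift_id, lift_id, mk_Iio_ordinal, ← hμ, ← lift_power, lift_lt]
  exact hκ.power_lt (lt_ord.mp hc) hX

theorem exists_injOn_mapsTo_of_mk_eq {X : Type (u + 1)} [Nonempty X] {F : Set X}
    (hF : #F = Cardinal.lift.{u + 1} κ) :
    ∃ v : Ordinal.{u} → X, InjOn v (Iio κ.ord) ∧ MapsTo v (Iio κ.ord) F := by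
  obtain ⟨e⟩ := Cardinal.eq.mp ((mk_Iio_ordinal _).trans (by rw [card_ord, hF]))
  have hext : ∀ α : Iio κ.ord, Function.extend Subtype.val (fun α => (e α : X))
      (fun _ => Classical.arbitrary X) α = e α :=
    Subtype.val_injective.extend_apply _ _
  refine ⟨Function.extend Subtype.val (fun α => (e α : X)) (fun _ => Classical.arbitrary X),
    fun α hα β hβ hαβ => ?_, fun α hα => ?_⟩
  · rw [hext ⟨α, hα⟩, hext ⟨β, hβ⟩] at hαβ
    exact congrArg Subtype.val (e.injective (Subtype.ext hαβ))
  · rw [hext ⟨α, hα⟩]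
    exact (e _).2

end Cardinal

namespace TukeySpec

theorem IsWeaklyCompact.exists_strictMonoOn_or_strictAntiOn {κ : Cardinal.{0}}
    (hκ : IsWeaklyCompact κ) {β : Type*} [LinearOrder β] {v : Ordinal.{0} → β}
    (hv : InjOn v (Iio κ.ord)) :
    ∃ H ⊆ Iio κ.ord, #H = Cardinal.lift.{1} κ ∧ (StrictMonoOn v H ∨ StrictAntiOn v H) := by
  obtain ⟨H, hHκ, hHcard, b, hb⟩ := hκ.2 fun α β => decide (v α < v β)
  refine ⟨H, hHκ, hHcard, ?_⟩
  cases b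
  · refine Or.inr fun α hα β hβ hαβ => ?_
    have hne : v α ≠ v β := fun h => hαβ.ne (hv (hHκ hα) (hHκ hβ) h)
    exact (not_lt.mp (of_decide_eq_false (hb α hα β hβ hαβ))).lt_of_ne' hne
  · exact Or.inl fun α hα β hβ hαβ => of_decide_eq_true (hb α hα β hβ hαβ)

theorem IsClubIn.mk_inter_Iio_lt {C : Set Ordinal.{0}} {o : Ordinal.{0}} (hC : IsClubIn C o)
    {a : Cardinal.{0}} (ha : ℵ₀ ≤ a) (hao : a.ord < o) (haC : a.ord ∉ C) :
    #(C ∩ Iio a.ord : Set Ordinal.{0}) < Cardinal.lift.{1} a := by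
  have hlim := isSuccLimit_ord ha
  obtain ⟨γ, hγa, hγ⟩ : ∃ γ < a.ord, ∀ x ∈ C, γ < x → a.ord ≤ x := by
    by_contra! h
    exact haC (hC.2.2 _ hao hlim.ne_bot h)
  refine mk_lt_of_subset_Iio (hlim.succ_lt hγa) fun x ⟨hxC, hxa⟩ => ?_
  exact Order.lt_succ_iff.mpr (le_of_not_gt fun hγx => (hγ x hxC hγx).not_gt hxa)

theorem exists_forall_ge_eqOn {κ : Cardinal.{0}} (hκ : κ.IsInaccessible) {A : Set Cardinal.{0}}
    {v : Ordinal.{0} → A → Ordinal.{0}} {H : Set Ordinal.{0}} (hH : H ⊆ Iio κ.ord)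
    (hHκ : #H = Cardinal.lift.{1} κ) (hvA : ∀ α ∈ H, v α ∈ piSet A)
    (hv : StrictMonoOn (toLex ∘ v) H ∨ StrictAntiOn (toLex ∘ v) H) {c : Ordinal.{0}}
    (hc : c < κ.ord) :
    ∃ δ ∈ H, ∀ α ∈ H, δ ≤ α → EqOn (v α) (v δ) {a | (a : Cardinal).ord ≤ c} := by
  set L : Set A := {a | (a : Cardinal).ord ≤ c}
  have hr := Pi.Lex.monotone_domRestrict (β := fun _ => Ordinal.{0}) (L := L)
    fun a b hba ha => (ord_le_ord.mpr hba).trans ha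
  set w : Ordinal.{0} → Lex (L → Ordinal.{0}) := fun α => toLex (L.domRestrict (v α))
  have hw : MonotoneOn w H ∨ AntitoneOn w H :=
    hv.imp (fun h => hr.comp_monotoneOn h.monotoneOn) (fun h => hr.comp_antitoneOn h.antitoneOn)
  have hLκ : #L < Cardinal.lift.{1} κ := by
    have hinj : InjOn (fun a : A => (a : Cardinal).ord) L :=
      fun a _ b _ hab => Subtype.ext (ord_injective hab)
    rw [← mk_image_eq_of_injOn _ _ hinj]
    refine mk_lt_of_subset_Iio ((isSuccLimit_ord hκ.aleph0_lt.le).succ_lt hc) ?_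
    rintro _ ⟨a, ha, rfl⟩
    exact Order.lt_succ_iff.mpr (show (a : Cardinal).ord ≤ c from ha)
  have hwH : w '' H ⊆ range fun g : L → Iio c => toLex fun a => (g a : Ordinal.{0}) := by
    rintro _ ⟨α, hα, rfl⟩
    exact ⟨fun a => ⟨v α a, (hvA α hα a).trans_le a.2⟩, rfl⟩
  obtain ⟨δ, hδH, hδ⟩ := hκ.isRegular.exists_forall_ge_eq_of_monotoneOn hH hHκ hw
    ((mk_le_mk_of_subset hwH).trans_lt (mk_range_le.trans_lt (hκ.mk_arrow_Iio_lt hLκ hc)))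
  exact ⟨δ, hδH, fun α hα hδα a ha => congrFun (hδ α hα hδα) ⟨a, ha⟩⟩

theorem bddIn_image_of_mk_inter_Iio_lt {A : Set Cardinal.{0}} (hA : ∀ a ∈ A, a.IsRegular)
    {C : Set Ordinal.{0}} {g : Ordinal.{0} → A → Ordinal.{0}} (hg : ∀ c ∈ C, g c ∈ piSet A)
    (hfew : ∀ a : A, #(C ∩ Iio (a : Cardinal).ord : Set Ordinal.{0}) < Cardinal.lift.{1} a)
    (htail : ∀ a : A, ∃ y < (a : Cardinal).ord, ∀ c ∈ C, (a : Cardinal).ord ≤ c → g c a ≤ y) :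
    BddIn A (g '' C) := by
  have hhead : ∀ a : A, ∃ β < (a : Cardinal).ord,
      (fun c => g c a) '' (C ∩ Iio (a : Cardinal).ord) ⊆ Iio β := fun a =>
    (hA a a.2).exists_subset_Iio_of_mk_lt (by rintro _ ⟨c, hc, rfl⟩; exact hg c hc.1 a)
      (mk_image_le.trans_lt (hfew a))
  choose β hβa hβ using hhead
  choose y hya hy using htail
  refine ⟨fun a => max (β a) (y a), fun a => max_lt (hβa a) (hya a), ?_⟩
  rintro _ ⟨c, hc, rfl⟩ a
  rcases lt_or_ge c (a : Cardinal).ord with hca | hac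
  · exact (hβ a ⟨c, ⟨hc, hca⟩, rfl⟩).le.trans (le_max_left _ _)
  · exact (hy a c hc hac).trans (le_max_right _ _)

theorem statement12_general (κ : Cardinal.{0}) (hwc : IsWeaklyCompact κ)
    (A : Set Cardinal.{0}) (hA : ∀ a ∈ A, a.IsRegular) (hsub : ∀ a ∈ A, a < κ)
    (hns : ¬ StatIn A κ) :
    κ ∉ spec A := by
  rintro ⟨hκ, F, hFA, hFκ, hFunb⟩
  obtain ⟨C, hC, hCA⟩ : ∃ C, IsClubIn C κ.ord ∧ ∀ a ∈ A, a.ord ∉ C := by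
    simpa [StatIn] using hns
  have haκ : ∀ a : A, (a : Cardinal).ord < κ.ord := fun a => ord_lt_ord.mpr (hsub a a.2)
  obtain ⟨v, hvinj, hvF⟩ := exists_injOn_mapsTo_of_mk_eq hFκ
  obtain ⟨H, hH, hHcard, hmono⟩ :=
    hwc.exists_strictMonoOn_or_strictAntiOn (v := toLex ∘ v) (toLex.injective.comp_injOn hvinj)
  have hvA : ∀ α ∈ H, v α ∈ piSet A := fun α hα => hFA (hvF (hH hα))
  choose! δ hδH hδ using fun c (hc : c < κ.ord) =>
    exists_forall_ge_eqOn hwc.1 hH hHcard hvA hmono hc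
  obtain ⟨s, hs⟩ := hκ.exists_selection hHcard fun c hc => hH (hδH c hc)
  choose hsH hcs hδs using hs
  have hsC : s '' C ⊆ H := by rintro _ ⟨c, hc, rfl⟩; exact hsH c (hC.1 hc)
  refine hFunb (v '' (s '' C)) (hvF.mono_left (hsC.trans hH)).image_subset ?_ ?_
  · rw [mk_image_eq_of_injOn _ _ (hvinj.mono (hsC.trans hH))]
    refine hκ.mk_eq_of_forall_exists_le (hsC.trans hH) fun β hβ => ?_
    obtain ⟨c, hc, hβc⟩ := hC.2.1 β hβ
    exact ⟨s c, mem_image_of_mem s hc, (hβc.trans (hcs c (hC.1 hc))).le⟩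
  · rw [← image_comp]
    refine bddIn_image_of_mk_inter_Iio_lt hA (fun c hc => hvA _ (hsH c (hC.1 hc)))
      (fun a => hC.mk_inter_Iio_lt (hA a a.2).aleph0_le (haκ a) (hCA a a.2)) fun a =>
        ⟨v (δ (a : Cardinal).ord) a, hvA _ (hδH _ (haκ a)) a, fun c hc hac => ?_⟩
    exact (hδ _ (haκ a) (s c) (hsH c (hC.1 hc)) (hδs c (hC.1 hc) _ hac).le
      (show (a : Cardinal).ord ≤ _ from le_rfl)).le

/-- If `κ` is weakly compact and `A ⊆ κ` is an unbounded,
nonstationary set of infinite regular cardinals, then `κ ∉ spec(A)`. -/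
theorem statement12 (κ : Cardinal.{0}) (hwc : IsWeaklyCompact κ)
    (A : Set Cardinal.{0}) (hA : ∀ a ∈ A, a.IsRegular) (hsub : ∀ a ∈ A, a < κ)
    (hunb : ∀ β < κ, ∃ a ∈ A, β < a) (hns : ¬ StatIn A κ) :
    κ ∉ spec A :=
  statement12_general κ hwc A hA hsub hns

end TukeySpec
end
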